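/- (State-estimate- and input-independence of the right-invariant IMU error dynamics.) Fix ω̃, ã, g ∈ ℝ³ and let f : Matrix 5 5 ℝ → Matrix 5 5 ℝ be the IMU process model: for a 5×5 matrix X with top-left 3×3 block R, 4th-column top entries v ∈ ℝ³, and 5th-column top entries p ∈ ℝ³, f(X) has top-left block R(ω̃)ₓ, 4th-column top entries Rã + g, 5th-column top entries v, and all other entries zero. Then for every 5×5 matrix η of the block form [[R_η, v_η, p_η], [0_{2×3}, I₂]], the right-invariant error vector field g_u(η) := f(η) − η f(I₅) equals the 5×5 matrix whose top-left 3×3 block is 0, whose 4th-column top entries are g − R_η g, whose 5th-column top entries are v_η, and whose remaining entries are zero. In particular, f(η) − η f(I₅) does not depend on the inputs ω̃ and ã. -/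

import Mathlib

open Matrix

/-- The skew-symmetric matrix `(ω)ₓ` associated with `ω ∈ ℝ³`. -/
def skew3 (ω : Fin 3 → ℝ) : Matrix (Fin 3) (Fin 3) ℝ :=
  !![0, -ω 2, ω 1; ω 2, 0, -ω 0; -ω 1, ω 0, 0]

/-- The top-left `3 × 3` block `R` of a `5 × 5` matrix. -/
def blockR (X : Matrix (Fin 5) (Fin 5) ℝ) : Matrix (Fin 3) (Fin 3) ℝ :=
  X.submatrix (Fin.castLE (by norm_num)) (Fin.castLE (by norm_num))

/-- The top three entries `v` of the 4th column of a `5 × 5` matrix. -/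
def colv (X : Matrix (Fin 5) (Fin 5) ℝ) : Fin 3 → ℝ :=
  fun i => X (Fin.castLE (by norm_num) i) 3

/-- The `5 × 5` matrix of block form `[[R, v, p], [0₂ₓ₃, I₂]]` (an element of
SE₂(3) when `R ∈ SO(3)`). -/
def se23 (R : Matrix (Fin 3) (Fin 3) ℝ) (v p : Fin 3 → ℝ) :
    Matrix (Fin 5) (Fin 5) ℝ :=
  Matrix.of fun i j =>
    if hi : (i : ℕ) < 3 then
      if hj : (j : ℕ) < 3 then R ⟨i, hi⟩ ⟨j, hj⟩
      else if (j : ℕ) = 3 then v ⟨i, hi⟩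
      else p ⟨i, hi⟩
    else if (i : ℕ) = (j : ℕ) then 1 else 0

/-- The `5 × 5` matrix with top-left block `R`, 4th-column top entries `v`,
5th-column top entries `p`, and all remaining entries zero. -/
def blk5 (R : Matrix (Fin 3) (Fin 3) ℝ) (v p : Fin 3 → ℝ) :
    Matrix (Fin 5) (Fin 5) ℝ :=
  Matrix.of fun i j =>
    if hi : (i : ℕ) < 3 then
      if hj : (j : ℕ) < 3 then R ⟨i, hi⟩ ⟨j, hj⟩
      else if (j : ℕ) = 3 then v ⟨i, hi⟩
      else p ⟨i, hi⟩
    else 0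

/-- The IMU process model `f` on `5 × 5` matrices: for `X` with blocks
`R, v, p`, `f X` has top-left block `R (ω̃)ₓ`, 4th-column top entries
`R ã + g`, 5th-column top entries `v`, and zeros elsewhere. -/
def fIMU (ω a g : Fin 3 → ℝ) (X : Matrix (Fin 5) (Fin 5) ℝ) :
    Matrix (Fin 5) (Fin 5) ℝ :=
  blk5 (blockR X * skew3 ω) (blockR X *ᵥ a + g) (colv X)

/-! Left multiplication by `η = [[R, v, p], [0, I₂]]` acts on a matrix whose bottom two rows vanish
by multiplying each of its top blocks by `R`. Hence `η f(I)` has blocks `R (ω)ₓ`, `R (ã + g)`, `0`,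
and subtracting it from `f(η)` cancels every input-dependent term. -/

section

variable (R : Matrix (Fin 3) (Fin 3) ℝ) (v p : Fin 3 → ℝ)

lemma blockR_se23 : blockR (se23 R v p) = R := by
  ext i j
  fin_cases i <;> fin_cases j <;> rfl

lemma colv_se23 : colv (se23 R v p) = v := by
  ext i
  fin_cases i <;> rfl

lemma fIMU_se23 (ω a g : Fin 3 → ℝ) :
    fIMU ω a g (se23 R v p) = blk5 (R * skew3 ω) (R *ᵥ a + g) v := by
  rw [fIMU, blockR_se23, colv_se23]

lemma se23_mul_blk5 (A : Matrix (Fin 3) (Fin 3) ℝ) (b c : Fin 3 → ℝ) :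
    se23 R v p * blk5 A b c = blk5 (R * A) (R *ᵥ b) (R *ᵥ c) := by
  ext i j
  fin_cases i <;> fin_cases j <;>
    simp [se23, blk5, mul_apply, Fin.sum_univ_five, mulVec, dotProduct, Fin.sum_univ_three]

end

lemma se23_one_zero_zero : se23 1 0 0 = 1 := by
  ext i j
  fin_cases i <;> fin_cases j <;> rfl

lemma blk5_sub (A A' : Matrix (Fin 3) (Fin 3) ℝ) (b b' c c' : Fin 3 → ℝ) :
    blk5 A b c - blk5 A' b' c' = blk5 (A - A') (b - b') (c - c') := by
  ext i j
  simp only [blk5, Matrix.sub_apply, of_apply, Pi.sub_apply]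
  split_ifs <;> simp

/-- **State-estimate- and input-independence of the right-invariant IMU error
dynamics.** For `η = [[R_η, v_η, p_η], [0, I₂]]`, the right-invariant error
vector field `g_u(η) = f(η) − η f(I₅)` equals the matrix with top-left block
`0`, 4th-column top entries `g − R_η g`, 5th-column top entries `v_η`, and
zeros elsewhere — in particular it does not depend on the inputs `ω̃, ã`. -/
theorem riekf_imu_error_field (ω a g : Fin 3 → ℝ)
    (R : Matrix (Fin 3) (Fin 3) ℝ) (v p : Fin 3 → ℝ) :
    fIMU ω a g (se23 R v p) - se23 R v p * fIMU ω a g 1 =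
      blk5 0 (g - R *ᵥ g) v := by
  have h_one : fIMU ω a g 1 = blk5 (skew3 ω) (a + g) 0 := by
    rw [← se23_one_zero_zero, fIMU_se23, Matrix.one_mul, one_mulVec]
  rw [fIMU_se23, h_one, se23_mul_blk5, blk5_sub, sub_self, mulVec_add, mulVec_zero, sub_zero]
  congr 1
  abel
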